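/- The countably infinite Cartesian power of the predecessor algebra (ω, p) is not a Ramsey algebra: the product algebra (ω^ω, P), where P acts coordinatewise by p, has an element (namely the identity sequence n ↦ n) that cannot be mapped to a fixed point of P by finitely many applications of P. -/

import Mathlib

namespace RamseyAlg

/- Orderly-term syntax trees over an operation-index type `ι`:
`leaf` is the identity (a single variable), `node g f` applies the basic
operation `g` to the results of the trees in the forest `f`. -/
mutual
  inductive OTree (ι : Type) : Type
    | leaf : OTree ι
    | node : ι → OForest ι → OTree ι
  inductive OForest (ι : Type) : Type
    | nil : OForest ι
    | cons : OTree ι → OForest ι → OForest ι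
end

def OForest.length {ι : Type} : OForest ι → ℕ
  | .nil => 0
  | .cons _ f => f.length + 1

/- Well-formedness: each node applies a `k`-ary basic operation to exactly
`k` subtrees, where `ar` gives the arities. -/
mutual
  def OTree.WF {ι : Type} (ar : ι → ℕ) : OTree ι → Prop
    | .leaf => True
    | .node g f => OForest.length f = ar g ∧ OForest.WF ar f
  def OForest.WF {ι : Type} (ar : ι → ℕ) : OForest ι → Prop
    | .nil => True
    | .cons t f => OTree.WF ar t ∧ OForest.WF ar f
end

/- Evaluation of an orderly term on an input list: the variables of the term
consume an initial segment of the list, in order, each exactly once; what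
remains of the list is returned alongside the value. -/
mutual
  def OTree.evalAux {ι A : Type} (F : ι → List A → A) :
      OTree ι → List A → Option (A × List A)
    | .leaf, [] => none
    | .leaf, a :: rest => some (a, rest)
    | .node g f, l =>
      match OForest.evalAux F f l with
      | none => none
      | some (rs, rest) => some (F g rs, rest)
  def OForest.evalAux {ι A : Type} (F : ι → List A → A) :
      OForest ι → List A → Option (List A × List A)
    | .nil, l => some ([], l)
    | .cons t f, l =>
      match OTree.evalAux F t l with
      | none => none
      | some (r, rest) =>
        match OForest.evalAux F f rest with
        | none => none
        | some (rs, rest') => some (r :: rs, rest')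
end

/- The value of the orderly term `t` on the finite sequence `l`, defined
exactly when the variables of `t` consume all of `l`. -/
def OTree.eval {ι A : Type} (F : ι → List A → A) (t : OTree ι) (l : List A) :
    Option A :=
  match OTree.evalAux F t l with
  | some (a, []) => some a
  | _ => none

/- `Reduction ar F a b` : `a` is a reduction of `b` with respect to `F`, i.e.
there are well-formed orderly terms `t j` applied to consecutive disjoint
finite subsequences of `b` (extracted by the strictly monotone `e`, in blocks
of lengths `len j`) producing the terms of `a` in order. -/
def Reduction {ι A : Type} (ar : ι → ℕ) (F : ι → List A → A)
    (a b : ℕ → A) : Prop :=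
  ∃ (t : ℕ → OTree ι) (len : ℕ → ℕ) (e : ℕ → ℕ),
    StrictMono e ∧ (∀ j, (t j).WF ar) ∧
    ∀ j, (t j).eval F ((List.range (len j)).map
        (fun i => b (e ((∑ m ∈ Finset.range j, len m) + i)))) = some (a j)

/- `FR ar F b` : the set of values of orderly terms over `F` applied to
finite subsequences of `b`. -/
def FR {ι A : Type} (ar : ι → ℕ) (F : ι → List A → A) (b : ℕ → A) : Set A :=
  { x | ∃ (t : OTree ι) (l : List ℕ), t.WF ar ∧ l.Chain' (· < ·) ∧
      t.eval F (l.map b) = some x }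

/- `(A, F)` is a Ramsey algebra: every infinite sequence has, for every
`X ⊆ A`, a reduction homogeneous for `X`. -/
def RamseyAlgebra {ι A : Type} (ar : ι → ℕ) (F : ι → List A → A) : Prop :=
  ∀ (b : ℕ → A) (X : Set A), ∃ a : ℕ → A,
    Reduction ar F a b ∧ (FR ar F a ⊆ X ∨ FR ar F a ∩ X = ∅)

end RamseyAlg

/-! With arity-one operations every orderly term is an iterate `f^[d]` of a single variable.
So a reduction `a` of the constant sequence `c` has `a 0 = f^[d] c`, and `FR a` contains both
`f^[d] c` and `f^[d+1] c`. If the orbit of `c` is injective, colouring it by the parity of the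
exponent separates these two, so no reduction is homogeneous. For the coordinatewise predecessor,
`P^[n] id = fun i => i - n`, so the orbit of the identity sequence is injective and never reaches a
fixed point. -/

theorem Function.iterate_mem_evenIterates_iff {A : Type} {f : A → A} {c : A}
    (hc : Injective fun n => f^[n] c) (n : ℕ) :
    f^[n] c ∈ {x | ∃ k, Even k ∧ x = f^[k] c} ↔ Even n :=
  ⟨fun ⟨_, hk, hn⟩ => hc hn ▸ hk, fun hn => ⟨n, hn, rfl⟩⟩

namespace RamseyAlg

variable {ι A : Type} [Inhabited A] (f : A → A)

theorem OTree.evalAux_unary {t : OTree ι} (ht : t.WF (fun _ => 1)) {l rest : List A} {r : A}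
    (h : t.evalAux (fun _ l => f l.headI) l = some (r, rest)) :
    ∃ d x, l = x :: rest ∧ r = f^[d] x := by
  match t, ht, l with
  | .leaf, _, x :: rest' =>
    simp only [OTree.evalAux, Option.some.injEq, Prod.mk.injEq] at h
    exact ⟨0, x, by rw [h.2], h.1.symm⟩
  | .node g (.cons s .nil), ⟨_, hs, _⟩, l =>
    simp only [OTree.evalAux, OForest.evalAux] at h
    cases hs' : s.evalAux (fun _ l => f l.headI) l with
    | none => simp [hs'] at h
    | some p =>
      obtain ⟨d, x, hl, hp⟩ := OTree.evalAux_unary hs hs'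
      simp only [hs', Option.some.injEq, Prod.mk.injEq] at h
      refine ⟨d + 1, x, h.2 ▸ hl, ?_⟩
      rw [← h.1, Function.iterate_succ_apply', hp]
      rfl
  | .node _ .nil, ⟨hlen, _⟩, _ => simp [OForest.length] at hlen
  | .node _ (.cons _ (.cons _ _)), ⟨hlen, _⟩, _ => simp [OForest.length] at hlen

theorem OTree.eval_unary {t : OTree ι} (ht : t.WF (fun _ => 1)) {l : List A} {r : A}
    (h : t.eval (fun _ l => f l.headI) l = some r) :
    ∃ d x, l = [x] ∧ r = f^[d] x := by
  unfold OTree.eval at h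
  split at h
  · obtain ⟨d, x, hl, hr⟩ := OTree.evalAux_unary f ht ‹_›
    exact ⟨d, x, hl, (Option.some.inj h) ▸ hr⟩
  · cases h

theorem Reduction.exists_eq_iterate {a b : ℕ → A}
    (h : Reduction (fun _ : ι => 1) (fun _ l => f l.headI) a b) (j : ℕ) :
    ∃ d i, a j = f^[d] (b i) := by
  obtain ⟨t, len, e, -, hwf, heval⟩ := h
  obtain ⟨d, x, hl, hr⟩ := OTree.eval_unary f (hwf j) (heval j)
  have hlen : len j = 1 := by simpa using congrArg List.length hl
  rw [hlen] at hl
  have hx : x = b (e (∑ m ∈ Finset.range j, len m)) := by simpa using hl.symm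
  exact ⟨d, _, hx ▸ hr⟩

def iterTerm (g : ι) : ℕ → OTree ι
  | 0 => .leaf
  | d + 1 => .node g (.cons (iterTerm g d) .nil)

theorem iterTerm_wf (g : ι) (d : ℕ) : (iterTerm g d).WF (fun _ => 1) := by
  induction d with
  | zero => trivial
  | succ d ih => exact ⟨rfl, ih, trivial⟩

theorem evalAux_iterTerm (g : ι) (d : ℕ) (x : A) (rest : List A) :
    (iterTerm g d).evalAux (fun _ l => f l.headI) (x :: rest) = some (f^[d] x, rest) := by
  induction d with
  | zero => rfl
  | succ d ih =>
    simp only [iterTerm, OTree.evalAux, OForest.evalAux, ih, Function.iterate_succ_apply']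
    rfl

theorem eval_iterTerm (g : ι) (d : ℕ) (x : A) :
    (iterTerm g d).eval (fun _ l => f l.headI) [x] = some (f^[d] x) := by
  simp only [OTree.eval, evalAux_iterTerm]

theorem iterate_mem_FR (g : ι) (a : ℕ → A) (d j : ℕ) :
    f^[d] (a j) ∈ FR (fun _ : ι => 1) (fun _ l => f l.headI) a :=
  ⟨iterTerm g d, [j], iterTerm_wf g d, List.isChain_singleton j, eval_iterTerm f g d (a j)⟩

theorem not_ramseyAlgebra_of_injective_iterate [Nonempty ι] {c : A}
    (hc : Function.Injective fun n => f^[n] c) :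
    ¬ RamseyAlgebra (fun _ : ι => 1) (fun _ l => f l.headI) := by
  intro hR
  obtain ⟨a, hred, hhom⟩ := hR (fun _ => c) {x | ∃ k, Even k ∧ x = f^[k] c}
  obtain ⟨d, -, ha⟩ := hred.exists_eq_iterate f 0
  have hmem (m : ℕ) : f^[m + d] c ∈ FR (fun _ : ι => 1) (fun _ l => f l.headI) a := by
    rw [Function.iterate_add_apply, ← ha]
    exact iterate_mem_FR f (Classical.arbitrary ι) a m 0
  have hparity := Function.iterate_mem_evenIterates_iff hc
  rcases hhom with hsub | hdisj
  · have h0 := (hparity _).1 (hsub (hmem 0))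
    have h1 := (hparity _).1 (hsub (hmem 1))
    grind
  · rcases Nat.even_or_odd d with hd | hd
    · exact hdisj.subset ⟨hmem 0, (hparity _).2 (by simpa using hd)⟩
    · exact hdisj.subset ⟨hmem 1, (hparity _).2 (by rw [add_comm]; exact hd.add_one)⟩

end RamseyAlg

theorem iterate_pointwise_pred_id (n : ℕ) :
    (fun (x : ℕ → ℕ) i => Nat.pred (x i))^[n] (fun i => i) = fun i => i - n := by
  induction n with
  | zero => rfl
  | succ n ih =>
    rw [Function.iterate_succ_apply', ih]
    funext i
    exact Nat.sub_sub i n 1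

open RamseyAlg in
/-- The countably infinite Cartesian power of the predecessor algebra,
`(ω^ω, P)` with `P` acting coordinatewise by `p`, is not a Ramsey algebra: the
identity sequence `n ↦ n` cannot be mapped to a fixed point of `P` by finitely many
applications of `P`. -/
theorem stmt5 :
    (∀ n : ℕ,
      ¬ ((fun (x : ℕ → ℕ) i => Nat.pred (x i))
          ((fun (x : ℕ → ℕ) i => Nat.pred (x i))^[n] (fun i => i)) =
        (fun (x : ℕ → ℕ) i => Nat.pred (x i))^[n] (fun i => i))) ∧
    ¬ RamseyAlgebra (fun _ : Unit => 1)
        (fun _ (l : List (ℕ → ℕ)) => fun i => Nat.pred (l.headI i)) := by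
  refine ⟨fun n h => ?_, not_ramseyAlgebra_of_injective_iterate (fun x i => Nat.pred (x i))
    (c := fun i => i) fun m n h => ?_⟩
  · have := congrFun h (n + 1)
    simp only [iterate_pointwise_pred_id] at this
    rw [Nat.pred_eq_sub_one] at this
    omega
  · have := congrFun h (m + n)
    simp only [iterate_pointwise_pred_id] at this
    omega
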